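/- Let L > 0, ν > 0, a ∈ ℝ³ with ‖a‖₂ = 1, and λ ∈ ℂ. Suppose v : ℝ → ℂ³ is twice continuously differentiable on [0, L], is not identically zero on [0, L], satisfies v′(0) = v′(L) = 0, and satisfies ν · v″(x) + a × v″(x) = λ · v(x) for all x ∈ [0, L]. Then there exists n ∈ ℕ such that λ = −(nπ/L)² ν, or λ = −(nπ/L)² ν + i (nπ/L)², or λ = −(nπ/L)² ν − i (nπ/L)². -/

import Mathlib

open Matrix Set

/-!
For `a · a = 1` the vectors `u` with `a × u = c u`, `c ∈ {0, i, -i}`, span `ℂ³`: besides `a`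
itself, `w - (a · w) a ± i (a × w)` is such a vector for every `w`. Pairing `ν v″ + a × v″ = λ v`
with one of them turns `f = u · v` into a solution of the scalar Neumann problem
`(ν - c) f″ = λ f`, and since they span we may choose `u` with `f ≢ 0`. Writing
`λ / (ν - c) = s²`, uniqueness for the linear ODE gives `f = f(0) cosh (s x)`, so `f′(L) = 0`
means `s sinh (s L) = 0`, i.e. `s L ∈ iπℤ`.
-/

theorem linear_ODE_solution_unique_Icc {E : Type*} [NormedAddCommGroup E] [NormedSpace ℝ E]
    (T : E →L[ℝ] E) {a b : ℝ} {F G : ℝ → E}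
    (hF : ∀ t ∈ Icc a b, HasDerivWithinAt F (T (F t)) (Icc a b) t)
    (hG : ∀ t ∈ Icc a b, HasDerivWithinAt G (T (G t)) (Icc a b) t)
    (ha : F a = G a) : EqOn F G (Icc a b) := by
  have hIcc : ∀ t ∈ Ico a b, Icc a b ∈ nhdsWithin t (Ici t) := fun t ht =>
    Filter.mem_of_superset (Icc_mem_nhdsGE_of_mem ⟨le_rfl, ht.2⟩) (Icc_subset_Icc_left ht.1)
  exact ODE_solution_unique_of_mem_Icc_right (v := fun _ => T) (s := fun _ => univ)
    (fun _ _ => T.lipschitz.lipschitzOnWith)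
    (fun t ht => (hF t ht).continuousWithinAt)
    (fun t ht => (hF t (Ico_subset_Icc_self ht)).mono_of_mem_nhdsWithin (hIcc t ht))
    (fun _ _ => mem_univ _)
    (fun t ht => (hG t ht).continuousWithinAt)
    (fun t ht => (hG t (Ico_subset_Icc_self ht)).mono_of_mem_nhdsWithin (hIcc t ht))
    (fun _ _ => mem_univ _) ha

theorem second_order_ODE_solution_unique_Icc {a b : ℝ} {μ : ℂ} {f f' g g' : ℝ → ℂ}
    (hf : ∀ t ∈ Icc a b, HasDerivWithinAt f (f' t) (Icc a b) t)
    (hf' : ∀ t ∈ Icc a b, HasDerivWithinAt f' (μ * f t) (Icc a b) t)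
    (hg : ∀ t ∈ Icc a b, HasDerivWithinAt g (g' t) (Icc a b) t)
    (hg' : ∀ t ∈ Icc a b, HasDerivWithinAt g' (μ * g t) (Icc a b) t)
    (h₀ : f a = g a) (h₀' : f' a = g' a) :
    ∀ t ∈ Icc a b, f t = g t ∧ f' t = g' t := fun _ ht =>
  Prod.ext_iff.1 <| linear_ODE_solution_unique_Icc
    ((ContinuousLinearMap.snd ℝ ℂ ℂ).prod (μ • ContinuousLinearMap.fst ℝ ℂ ℂ))
    (fun t ht => (hf t ht).prodMk (hf' t ht)) (fun t ht => (hg t ht).prodMk (hg' t ht))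
    (Prod.ext h₀ h₀') ht

theorem exists_nat_sq_eq_of_mul_sinh_eq_zero {s : ℂ} {L : ℝ} (hL : L ≠ 0)
    (h : s * Complex.sinh (s * L) = 0) :
    ∃ n : ℕ, s ^ 2 = -(((n * Real.pi / L : ℝ)) : ℂ) ^ 2 := by
  rcases mul_eq_zero.1 h with rfl | h
  · exact ⟨0, by simp⟩
  obtain ⟨k, hk⟩ : ∃ k : ℤ, s * L * Complex.I = k * Real.pi := by
    rw [← Complex.sin_eq_zero_iff, Complex.sin_mul_I, h, zero_mul]
  refine ⟨k.natAbs, ?_⟩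
  have hk2 : (k.natAbs : ℂ) ^ 2 = (k : ℂ) ^ 2 := by
    rw [← Int.cast_natCast, ← Int.cast_pow, Int.natAbs_sq, Int.cast_pow]
  have hsL : -((k : ℂ) * Real.pi) ^ 2 = s ^ 2 * L ^ 2 := by
    linear_combination (s * L * Complex.I + k * Real.pi) * hk - s ^ 2 * L ^ 2 * Complex.I_sq
  have hLc : (L : ℂ) ≠ 0 := by exact_mod_cast hL
  push_cast
  rw [div_pow, mul_pow, hk2, ← mul_pow, ← neg_div, hsL]
  field_simp

theorem exists_eq_neg_sq_of_neumann_eigenfunction {L : ℝ} (hL : 0 < L) {μ : ℂ} {f f' : ℝ → ℂ}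
    (hf : ∀ x ∈ Icc 0 L, HasDerivWithinAt f (f' x) (Icc 0 L) x)
    (hf' : ∀ x ∈ Icc 0 L, HasDerivWithinAt f' (μ * f x) (Icc 0 L) x)
    (h₀ : f' 0 = 0) (h_L : f' L = 0) (hne : ∃ x ∈ Icc 0 L, f x ≠ 0) :
    ∃ n : ℕ, μ = -(((n * Real.pi / L : ℝ)) : ℂ) ^ 2 := by
  obtain ⟨s, rfl⟩ : ∃ s, μ = s ^ 2 := by
    simpa only [sq] using IsAlgClosed.exists_eq_mul_self μ
  have hcosh (x : ℝ) : HasDerivAt (fun t : ℝ => f 0 * Complex.cosh (s * t))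
      (f 0 * (s * Complex.sinh (s * x))) x := by
    have hs := (hasDerivAt_id' (x : ℂ)).const_mul s
    exact (((Complex.hasDerivAt_cosh _).comp _ hs).const_mul (f 0)).comp_ofReal.congr_deriv
      (by ring)
  have hsinh (x : ℝ) : HasDerivAt (fun t : ℝ => f 0 * (s * Complex.sinh (s * t)))
      (s ^ 2 * (f 0 * Complex.cosh (s * x))) x := by
    have hs := (hasDerivAt_id' (x : ℂ)).const_mul s
    exact ((((Complex.hasDerivAt_sinh _).comp _ hs).const_mul s).const_mul (f 0)).comp_ofReal
      |>.congr_deriv (by ring)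
  have hsol := second_order_ODE_solution_unique_Icc hf hf'
    (fun x _ => (hcosh x).hasDerivWithinAt) (fun x _ => (hsinh x).hasDerivWithinAt)
    (by simp) (by simp [h₀])
  have hf₀ : f 0 ≠ 0 := by
    obtain ⟨x, hx, hfx⟩ := hne
    intro h
    simp [(hsol x hx).1, h] at hfx
  exact exists_nat_sq_eq_of_mul_sinh_eq_zero hL.ne' <|
    (mul_eq_zero.1 ((hsol L (right_mem_Icc.2 hL.le)).2 ▸ h_L)).resolve_left hf₀

theorem HasDerivWithinAt.const_dotProduct {ι 𝕜 𝔸 : Type*} [Fintype ι] [NontriviallyNormedField 𝕜]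
    [NormedCommRing 𝔸] [NormedAlgebra 𝕜 𝔸] {v : 𝕜 → ι → 𝔸} {v' : ι → 𝔸} {s : Set 𝕜} {x : 𝕜}
    (u : ι → 𝔸) (h : HasDerivWithinAt v v' s x) :
    HasDerivWithinAt (fun t => u ⬝ᵥ v t) (u ⬝ᵥ v') s x := by
  simpa only [dotProduct] using
    HasDerivWithinAt.fun_sum fun i _ => (hasDerivWithinAt_pi.1 h i).const_mul (u i)

section CrossProduct

variable {R : Type*} [CommRing R]

theorem dotProduct_cross_of_cross_eq_smul {a u : Fin 3 → R} {c : R} (hu : a ⨯₃ u = c • u)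
    (w : Fin 3 → R) : u ⬝ᵥ a ⨯₃ w = -c * (u ⬝ᵥ w) := by
  rw [triple_product_permutation, triple_product_permutation, ← cross_anticomm, hu,
    dotProduct_neg, dotProduct_smul, smul_eq_mul, dotProduct_comm, neg_mul]

/-- Twice the projection of `w` onto the `-ε`-eigenspace of `a ⨯₃ ·`, when `a ⬝ᵥ a = 1` and
`ε ^ 2 = -1`. -/
def crossEigenvector (a : Fin 3 → R) (ε : R) (w : Fin 3 → R) : Fin 3 → R :=
  w - (a ⬝ᵥ w) • a + ε • a ⨯₃ w

theorem cross_crossEigenvector {a : Fin 3 → R} (ha : a ⬝ᵥ a = 1) {ε : R} (hε : ε ^ 2 = -1)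
    (w : Fin 3 → R) : a ⨯₃ crossEigenvector a ε w = -ε • crossEigenvector a ε w := by
  have hcc : a ⨯₃ (a ⨯₃ w) = (a ⬝ᵥ w) • a - w := by
    rw [cross_cross_eq_smul_sub_smul', ha, one_smul]
  simp only [crossEigenvector, map_add, map_sub, map_smul, cross_self, smul_zero, sub_zero, hcc]
  linear_combination (norm := module) hε • a ⨯₃ w

theorem crossEigenvector_add_crossEigenvector_neg (a : Fin 3 → R) (ε : R) (w : Fin 3 → R) :
    crossEigenvector a ε w + crossEigenvector a (-ε) w = (2 : R) • (w - (a ⬝ᵥ w) • a) := by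
  simp only [crossEigenvector]
  module

end CrossProduct

open scoped ComplexOrder in
theorem exists_cross_eq_smul_dotProduct_ne_zero {a w : Fin 3 → ℂ} (ha : a ⬝ᵥ a = 1)
    (hw : w ≠ 0) :
    ∃ c : ℂ, (c = 0 ∨ c = Complex.I ∨ c = -Complex.I) ∧
      ∃ u : Fin 3 → ℂ, a ⨯₃ u = c • u ∧ u ⬝ᵥ w ≠ 0 := by
  by_contra! h
  have h₀ : a ⬝ᵥ w = 0 := h 0 (Or.inl rfl) a (by rw [cross_self, zero_smul])
  have hplus := h _ (Or.inr (Or.inr rfl)) _ (cross_crossEigenvector ha Complex.I_sq (star w))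
  have hminus := h _ (Or.inr (Or.inl (neg_neg _))) _
    (cross_crossEigenvector ha (by rw [neg_sq, Complex.I_sq]) (star w))
  -- `a` and `crossEigenvector a (±i) (star w)` combine to `2 • star w`, and `star w ⬝ᵥ w ≠ 0`
  have hsum := congrArg (· ⬝ᵥ w) (crossEigenvector_add_crossEigenvector_neg a Complex.I (star w))
  simp only [add_dotProduct, hplus, hminus, smul_dotProduct, sub_dotProduct, h₀, smul_eq_mul,
    mul_zero, sub_zero, add_zero] at hsum
  exact hw (dotProduct_star_self_eq_zero.1 ((mul_eq_zero.1 hsum.symm).resolve_left two_ne_zero))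

theorem exists_eq_neg_sq_mul_of_cross_eq_smul {L : ℝ} (hL : 0 < L) {ν c lam : ℂ}
    {a u : Fin 3 → ℂ} (hu : a ⨯₃ u = c • u) (hνc : ν - c ≠ 0) {v v' v'' : ℝ → Fin 3 → ℂ}
    (hv : ∀ x ∈ Icc 0 L, HasDerivWithinAt v (v' x) (Icc 0 L) x)
    (hv' : ∀ x ∈ Icc 0 L, HasDerivWithinAt v' (v'' x) (Icc 0 L) x)
    (hb0 : v' 0 = 0) (hbL : v' L = 0)
    (heq : ∀ x ∈ Icc 0 L, ν • v'' x + a ⨯₃ v'' x = lam • v x)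
    (hne : ∃ x ∈ Icc 0 L, u ⬝ᵥ v x ≠ 0) :
    ∃ n : ℕ, lam = -(((n * Real.pi / L : ℝ)) : ℂ) ^ 2 * (ν - c) := by
  have hpair : ∀ x ∈ Icc 0 L, u ⬝ᵥ v'' x = lam / (ν - c) * (u ⬝ᵥ v x) := by
    intro x hx
    have := congrArg (u ⬝ᵥ ·) (heq x hx)
    simp only [dotProduct_add, dotProduct_smul, smul_eq_mul,
      dotProduct_cross_of_cross_eq_smul hu] at this
    field_simp
    linear_combination this
  obtain ⟨n, hn⟩ := exists_eq_neg_sq_of_neumann_eigenfunction hL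
    (fun x hx => (hv x hx).const_dotProduct u)
    (fun x hx => hpair x hx ▸ (hv' x hx).const_dotProduct u)
    (by simp [hb0]) (by simp [hbL]) hne
  exact ⟨n, by rw [← hn]; field_simp⟩

theorem linearized_landau_lifshitz_eigenvalues_general (L ν : ℝ) (hL : 0 < L) (hν : 0 < ν)
    (a : Fin 3 → ℝ) (ha : Real.sqrt (∑ i, a i ^ 2) = 1) (lam : ℂ)
    (v v' v'' : ℝ → Fin 3 → ℂ)
    (hv : ∀ x ∈ Icc (0 : ℝ) L, HasDerivWithinAt v (v' x) (Icc (0 : ℝ) L) x)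
    (hv' : ∀ x ∈ Icc (0 : ℝ) L, HasDerivWithinAt v' (v'' x) (Icc (0 : ℝ) L) x)
    (hne : ¬ ∀ x ∈ Icc (0 : ℝ) L, v x = 0)
    (hb0 : v' 0 = 0) (hbL : v' L = 0)
    (heq : ∀ x ∈ Icc (0 : ℝ) L,
      (ν : ℂ) • v'' x + (fun i => (a i : ℂ)) ⨯₃ (v'' x) = lam • v x) :
    ∃ n : ℕ,
      lam = -((((n : ℝ) * Real.pi / L) ^ 2 * ν : ℝ) : ℂ) ∨
      lam = -((((n : ℝ) * Real.pi / L) ^ 2 * ν : ℝ) : ℂ)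
          + Complex.I * ((((n : ℝ) * Real.pi / L) ^ 2 : ℝ) : ℂ) ∨
      lam = -((((n : ℝ) * Real.pi / L) ^ 2 * ν : ℝ) : ℂ)
          - Complex.I * ((((n : ℝ) * Real.pi / L) ^ 2 : ℝ) : ℂ) := by
  have ha' : (fun i => (a i : ℂ)) ⬝ᵥ (fun i => (a i : ℂ)) = 1 := by
    simp only [dotProduct, ← sq]
    exact_mod_cast Real.sqrt_eq_one.1 ha
  push Not at hne
  obtain ⟨x₀, hx₀, hvx₀⟩ := hne
  obtain ⟨c, hc, u, hu, hux₀⟩ := exists_cross_eq_smul_dotProduct_ne_zero ha' hvx₀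
  have hνc : (ν : ℂ) - c ≠ 0 := by
    have hc_re : c.re = 0 := by rcases hc with rfl | rfl | rfl <;> simp
    refine fun h => hν.ne' ?_
    simpa [hc_re] using congrArg Complex.re h
  obtain ⟨n, hn⟩ :=
    exists_eq_neg_sq_mul_of_cross_eq_smul hL hu hνc hv hv' hb0 hbL heq ⟨x₀, hx₀, hux₀⟩
  refine ⟨n, ?_⟩
  rcases hc with rfl | rfl | rfl
  · left; rw [hn]; push_cast; ring
  · right; left; rw [hn]; push_cast; ring
  · right; right; rw [hn]; push_cast; ring

/-- Every eigenvalue of the linearized Landau–Lifshitz operator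
`A v = ν v″ + a × v″` on `[0, L]` with Neumann boundary conditions is of the form
`-(nπ/L)² ν`, `-(nπ/L)² ν + i (nπ/L)²` or `-(nπ/L)² ν - i (nπ/L)²` for some `n ∈ ℕ`. -/
theorem linearized_landau_lifshitz_eigenvalues (L ν : ℝ) (hL : 0 < L) (hν : 0 < ν)
    (a : Fin 3 → ℝ) (ha : Real.sqrt (∑ i, a i ^ 2) = 1) (lam : ℂ)
    (v v' v'' : ℝ → Fin 3 → ℂ)
    (hv : ∀ x ∈ Icc (0 : ℝ) L, HasDerivWithinAt v (v' x) (Icc (0 : ℝ) L) x)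
    (hv' : ∀ x ∈ Icc (0 : ℝ) L, HasDerivWithinAt v' (v'' x) (Icc (0 : ℝ) L) x)
    (hv'' : ContinuousOn v'' (Icc (0 : ℝ) L))
    (hne : ¬ ∀ x ∈ Icc (0 : ℝ) L, v x = 0)
    (hb0 : v' 0 = 0) (hbL : v' L = 0)
    (heq : ∀ x ∈ Icc (0 : ℝ) L,
      (ν : ℂ) • v'' x + (fun i => (a i : ℂ)) ⨯₃ (v'' x) = lam • v x) :
    ∃ n : ℕ,
      lam = -((((n : ℝ) * Real.pi / L) ^ 2 * ν : ℝ) : ℂ) ∨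
      lam = -((((n : ℝ) * Real.pi / L) ^ 2 * ν : ℝ) : ℂ)
          + Complex.I * ((((n : ℝ) * Real.pi / L) ^ 2 : ℝ) : ℂ) ∨
      lam = -((((n : ℝ) * Real.pi / L) ^ 2 * ν : ℝ) : ℂ)
          - Complex.I * ((((n : ℝ) * Real.pi / L) ^ 2 : ℝ) : ℂ) :=
  linearized_landau_lifshitz_eigenvalues_general L ν hL hν a ha lam v v' v'' hv hv' hne hb0 hbL heq
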